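/- arXiv:2505.22121 — 3 statements merged into one kernel-verified Lean document; each statement's English description precedes it below -/
import Mathlib

section
/- Let W be an integrable real random variable, let α ∈ (0,1], and let q be a real number with P(W < q) ≤ α ≤ P(W ≤ q). Then for every real number a, a + (1/α) · E[min(W - a, 0)] ≤ q + (1/α) · E[min(W - q, 0)]. -/
open MeasureTheory

theorem stmt_3 {Ω : Type*} [MeasurableSpace Ω] (μ : Measure Ω) [IsProbabilityMeasure μ]
    (W : Ω → ℝ) (hW : Integrable W μ) (α : ℝ) (hα : α ∈ Set.Ioc (0 : ℝ) 1)
    (q : ℝ) (hq1 : (μ {ω | W ω < q}).toReal ≤ α) (hq2 : α ≤ (μ {ω | W ω ≤ q}).toReal) :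
    ∀ a : ℝ, a + (1 / α) * ∫ ω, min (W ω - a) 0 ∂μ
      ≤ q + (1 / α) * ∫ ω, min (W ω - q) 0 ∂μ := by
  obtain ⟨V, hVsm, hWV⟩ := hW.aestronglyMeasurable
  have hVm : Measurable V := hVsm.measurable
  have hVint : Integrable V μ := hW.congr hWV
  have hIeq : ∀ b : ℝ, (∫ ω, min (W ω - b) 0 ∂μ) = ∫ ω, min (V ω - b) 0 ∂μ := by
    intro b
    refine integral_congr_ae (hWV.mono fun ω h => by simp only [h])
  have hlt : μ {ω | V ω < q} = μ {ω | W ω < q} := by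
    refine measure_congr (hWV.mono fun ω h => ?_)
    show (V ω < q) = (W ω < q)
    rw [h]
  have hle : μ {ω | V ω ≤ q} = μ {ω | W ω ≤ q} := by
    refine measure_congr (hWV.mono fun ω h => ?_)
    show (V ω ≤ q) = (W ω ≤ q)
    rw [h]
  have hMlt : MeasurableSet {ω | V ω < q} := measurableSet_lt hVm measurable_const
  have hMle : MeasurableSet {ω | V ω ≤ q} := measurableSet_le hVm measurable_const
  have hminint : ∀ b : ℝ, Integrable (fun ω => min (V ω - b) 0) μ := fun b =>
    (hVint.sub (integrable_const b)).inf (integrable_const 0)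
  have hα0 : 0 < α := hα.1
  have key : ∀ a : ℝ, (∫ ω, min (V ω - a) 0 ∂μ) - ∫ ω, min (V ω - q) 0 ∂μ ≤ (q - a) * α := by
    intro a
    rcases le_total a q with haq | haq
    · have hb : ∀ ω, min (V ω - a) 0 - min (V ω - q) 0
          ≤ Set.indicator {ω | V ω < q} (fun _ => q - a) ω := by
        intro ω
        by_cases h : V ω < q
        · rcases le_or_gt a (V ω) with h2 | h2 <;>
            simp [Set.indicator, h, min_def] <;> split_ifs <;> linarith
        · simp [Set.indicator, h, min_def]; split_ifs <;> linarith
      have hmono := integral_mono ((hminint a).sub (hminint q))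
        ((integrable_const (q - a)).indicator hMlt) hb
      simp only [Pi.sub_apply] at hmono
      rw [integral_sub (hminint a) (hminint q)] at hmono
      rw [integral_indicator_const _ hMlt] at hmono
      refine hmono.trans ?_
      have : ((μ {ω | V ω < q}).toReal) ≤ α := by rw [hlt]; exact hq1
      calc (μ {ω | V ω < q}).toReal • (q - a) = (q - a) * (μ {ω | V ω < q}).toReal := by
            rw [smul_eq_mul]; ring
        _ ≤ (q - a) * α := by
            exact mul_le_mul_of_nonneg_left this (by linarith)
    · have hb : ∀ ω, min (V ω - a) 0 - min (V ω - q) 0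
          ≤ Set.indicator {ω | V ω ≤ q} (fun _ => q - a) ω := by
        intro ω
        by_cases h : V ω ≤ q
        · simp [Set.indicator, h, min_def]; split_ifs <;> linarith
        · simp [Set.indicator, h, min_def]; split_ifs <;> linarith
      have hmono := integral_mono ((hminint a).sub (hminint q))
        ((integrable_const (q - a)).indicator hMle) hb
      simp only [Pi.sub_apply] at hmono
      rw [integral_sub (hminint a) (hminint q)] at hmono
      rw [integral_indicator_const _ hMle] at hmono
      refine hmono.trans ?_
      have : α ≤ ((μ {ω | V ω ≤ q}).toReal) := by rw [hle]; exact hq2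
      calc (μ {ω | V ω ≤ q}).toReal • (q - a) = (q - a) * (μ {ω | V ω ≤ q}).toReal := by
            rw [smul_eq_mul]; ring
        _ ≤ (q - a) * α := mul_le_mul_of_nonpos_left this (by linarith)
  intro a
  rw [hIeq a, hIeq q]
  have h1 := key a
  have h2 : (1 / α) * ((∫ ω, min (V ω - a) 0 ∂μ) - ∫ ω, min (V ω - q) 0 ∂μ)
      ≤ (1 / α) * ((q - a) * α) := mul_le_mul_of_nonneg_left h1 (by positivity)
  have h3 : (1 / α) * ((q - a) * α) = q - a := by field_simp
  rw [mul_sub, h3] at h2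
  linarith
end

section
/- Let W be an integrable real random variable, α ∈ (0,1], and D, q real numbers such that P(W ≤ q) = α and E[W · 1_{W ≤ q}] = D·α. Then for every W_o > D one has E[max(1 - (W - D)/(W_o - D), 0)] ≥ α. -/
/-! On the event `{W ≤ q}` the affine function `1 - (W - D) / (Wo - D)` has integral exactly
`P(W ≤ q) = α`, because `D` is the conditional mean of `W` there. Its positive part dominates it on
that event and is nonnegative everywhere, so its expectation is at least `α`. -/

open MeasureTheory

lemma setIntegral_one_sub_div_eq_measureReal {Ω : Type*} [MeasurableSpace Ω] {μ : Measure Ω}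
    [IsFiniteMeasure μ] {s : Set Ω} {W : Ω → ℝ} (hW : IntegrableOn W s μ)
    {D : ℝ} (hD : ∫ ω in s, W ω ∂μ = D * μ.real s) (c : ℝ) :
    ∫ ω in s, (1 - (W ω - D) / c) ∂μ = μ.real s := by
  have hWD : ∫ ω in s, (W ω - D) ∂μ = 0 := by
    rw [integral_sub hW (integrable_const D), hD, setIntegral_const, smul_eq_mul, mul_comm, sub_self]
  have hWDc : IntegrableOn (fun ω => (W ω - D) / c) s μ := (hW.sub (integrable_const D)).div_const c
  rw [integral_sub (integrable_const 1) hWDc, integral_div,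
    hWD, setIntegral_const, smul_eq_mul, mul_one, zero_div, sub_zero]

theorem stmt_6_general {Ω : Type*} [MeasurableSpace Ω] (μ : Measure Ω) [IsProbabilityMeasure μ]
    (W : Ω → ℝ) (hW : Integrable W μ) (α : ℝ)
    (D q : ℝ) (hq : (μ {ω | W ω ≤ q}).toReal = α)
    (hD : ∫ ω in {ω | W ω ≤ q}, W ω ∂μ = D * α) :
    ∀ Wo : ℝ, D < Wo →
      α ≤ ∫ ω, max (1 - (W ω - D) / (Wo - D)) 0 ∂μ := by
  intro Wo _
  set s := {ω | W ω ≤ q}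
  set g := fun ω => 1 - (W ω - D) / (Wo - D)
  have hg : Integrable g μ := (integrable_const 1).sub ((hW.sub (integrable_const D)).div_const _)
  have hμs : μ.real s = α := hq
  calc α = ∫ ω in s, g ω ∂μ :=
        (setIntegral_one_sub_div_eq_measureReal hW.integrableOn (hμs ▸ hD) _).trans hμs |>.symm
    _ ≤ ∫ ω in s, max (g ω) 0 ∂μ :=
        setIntegral_mono hg.integrableOn hg.pos_part.integrableOn fun _ => le_max_left _ _
    _ ≤ ∫ ω, max (g ω) 0 ∂μ :=
        setIntegral_le_integral hg.pos_part (ae_of_all _ fun _ => le_max_right _ _)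

theorem stmt_6 {Ω : Type*} [MeasurableSpace Ω] (μ : Measure Ω) [IsProbabilityMeasure μ]
    (W : Ω → ℝ) (hW : Integrable W μ) (α : ℝ) (hα : α ∈ Set.Ioc (0 : ℝ) 1)
    (D q : ℝ) (hq : (μ {ω | W ω ≤ q}).toReal = α)
    (hD : ∫ ω in {ω | W ω ≤ q}, W ω ∂μ = D * α) :
    ∀ Wo : ℝ, D < Wo →
      α ≤ ∫ ω, max (1 - (W ω - D) / (Wo - D)) 0 ∂μ :=
  stmt_6_general μ W hW α D q hq hD
end

section
/- Let W be an integrable real random variable, α ∈ (0,1], and D, q real numbers with D < q such that P(W ≤ q) = α and E[W · 1_{W ≤ q}] = D·α. Then E[max(1 - (W - D)/(q - D), 0)] = α. -/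
/-!
On `{W ≤ q}` the integrand `max (1 - (W - D) / (q - D)) 0` is the affine function
`(q - W) / (q - D)`, and off it the integrand vanishes. So its expectation is
`(q · P(W ≤ q) - E[W · 1_{W ≤ q}]) / (q - D) = (q α - D α) / (q - D) = α`.
-/

open MeasureTheory

lemma max_one_sub_div_zero_eq {D q : ℝ} (hDq : D < q) (w : ℝ) :
    max (1 - (w - D) / (q - D)) 0 = max (q - w) 0 / (q - D) := by
  have hqD : 0 < q - D := sub_pos.2 hDq
  rw [← max_div_div_right hqD.le, zero_div]
  congr 1
  field_simp
  ring

lemma integral_max_sub_zero_eq {Ω : Type*} [MeasurableSpace Ω] {μ : Measure Ω} [IsFiniteMeasure μ]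
    {W : Ω → ℝ} (hW : Integrable W μ) (q : ℝ) :
    ∫ ω, max (q - W ω) 0 ∂μ = q * μ.real {ω | W ω ≤ q} - ∫ ω in {ω | W ω ≤ q}, W ω ∂μ := by
  have hs : NullMeasurableSet {ω | W ω ≤ q} μ :=
    nullMeasurableSet_le hW.aemeasurable aemeasurable_const
  calc ∫ ω, max (q - W ω) 0 ∂μ
      = ∫ ω in {ω | W ω ≤ q}, max (q - W ω) 0 ∂μ :=
        (setIntegral_eq_integral_of_forall_compl_eq_zero fun ω hω =>
          max_eq_right (sub_nonpos.2 (le_of_lt (not_le.1 hω)))).symm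
    _ = ∫ ω in {ω | W ω ≤ q}, (q - W ω) ∂μ :=
        setIntegral_congr_fun₀ hs fun ω hω => max_eq_left (sub_nonneg.2 hω)
    _ = q * μ.real {ω | W ω ≤ q} - ∫ ω in {ω | W ω ≤ q}, W ω ∂μ := by
        rw [integral_sub (integrable_const q) hW.integrableOn, setIntegral_const, smul_eq_mul,
          mul_comm]

theorem stmt_7_general {Ω : Type*} [MeasurableSpace Ω] (μ : Measure Ω) [IsProbabilityMeasure μ]
    (W : Ω → ℝ) (hW : Integrable W μ) (α : ℝ)
    (D q : ℝ) (hDq : D < q) (hq : (μ {ω | W ω ≤ q}).toReal = α)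
    (hD : ∫ ω in {ω | W ω ≤ q}, W ω ∂μ = D * α) :
    ∫ ω, max (1 - (W ω - D) / (q - D)) 0 ∂μ = α := by
  have hqD : q - D ≠ 0 := (sub_pos.2 hDq).ne'
  simp_rw [max_one_sub_div_zero_eq hDq]
  rw [integral_div, integral_max_sub_zero_eq hW, measureReal_def, hq, hD, ← sub_mul,
    mul_div_cancel_left₀ _ hqD]

theorem stmt_7 {Ω : Type*} [MeasurableSpace Ω] (μ : Measure Ω) [IsProbabilityMeasure μ]
    (W : Ω → ℝ) (hW : Integrable W μ) (α : ℝ) (hα : α ∈ Set.Ioc (0 : ℝ) 1)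
    (D q : ℝ) (hDq : D < q) (hq : (μ {ω | W ω ≤ q}).toReal = α)
    (hD : ∫ ω in {ω | W ω ≤ q}, W ω ∂μ = D * α) :
    ∫ ω, max (1 - (W ω - D) / (q - D)) 0 ∂μ = α :=
  stmt_7_general μ W hW α D q hDq hq hD
end
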